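/- Let ψ : [t₀,∞) → ℝ₊ be continuous non-increasing with t·ψ(t) non-decreasing and t·ψ(t) < 1 for large t, and define r by r((1/2)·ln(t/ψ(t))) = √(t·ψ(t)). Then the integral ∫(1 − r(s)) ds converges if and only if the series Σ_k (1/k − ψ(k)) converges. -/

import Mathlib

open MeasureTheory Set

lemma aux_sqrt_le {F : ℝ} (h0 : 0 ≤ F) (h1 : F ≤ 1) : F ≤ Real.sqrt F := by
  nlinarith [Real.sq_sqrt h0, Real.sqrt_nonneg F, Real.sqrt_le_one.mpr h1]

lemma aux_half_le {F : ℝ} (h0 : 0 ≤ F) (h1 : F ≤ 1) : (1 - F) / 2 ≤ 1 - Real.sqrt F := by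
  nlinarith [Real.sq_sqrt h0, Real.sqrt_nonneg F, Real.sqrt_le_one.mpr h1]

lemma aux_log_le {x : ℝ} (hx : 0 < x) : Real.log (x + 1) - Real.log x ≤ 1 / x := by
  rw [← Real.log_div (by linarith) (ne_of_gt hx)]
  have h : (x + 1) / x = 1 + 1 / x := by field_simp
  rw [h]
  have := Real.log_le_sub_one_of_pos (x := 1 + 1/x) (by positivity)
  linarith

lemma aux_le_log {x : ℝ} (hx : 0 < x) : 1 / (x + 1) ≤ Real.log (x + 1) - Real.log x := by
  have h1 : (0:ℝ) < x + 1 := by linarith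
  have h2 := Real.log_le_sub_one_of_pos (x := x / (x+1)) (by positivity)
  rw [Real.log_div (ne_of_gt hx) (ne_of_gt h1)] at h2
  have hh : x/(x+1) - 1 = -(1/(x+1)) := by field_simp; ring
  linarith

theorem dani_integral_iff_sum (t₀ : ℝ) (ht₀ : 1 ≤ t₀) (ψ : ℝ → ℝ) (r : ℝ → ℝ)
    (hpos : ∀ t ≥ t₀, 0 < ψ t)
    (hcont : ContinuousOn ψ (Set.Ici t₀))
    (hanti : AntitoneOn ψ (Set.Ici t₀))
    (hmono : MonotoneOn (fun t => t * ψ t) (Set.Ici t₀))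
    (hlt : ∃ T ≥ t₀, ∀ t ≥ T, t * ψ t < 1)
    (hr : ∀ t ≥ t₀, r ((1 / 2) * Real.log (t / ψ t)) = Real.sqrt (t * ψ t)) :
    IntegrableOn (fun s => 1 - r s)
        (Set.Ici ((1 / 2) * Real.log (t₀ / ψ t₀))) volume ↔
      Summable (fun k : ℕ => if t₀ ≤ (k : ℝ) then 1 / (k : ℝ) - ψ k else 0) := by
  set S : ℝ → ℝ := fun t => (1 / 2) * Real.log (t / ψ t) with hS_def
  set s₀ : ℝ := S t₀ with hs₀_def
  set T : ℕ → ℝ := fun k => if t₀ ≤ (k : ℝ) then 1 / (k : ℝ) - ψ k else 0 with hT_def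
  -- basic positivity facts
  have htpos : ∀ t ≥ t₀, (0:ℝ) < t := fun t ht => lt_of_lt_of_le (by linarith) ht
  have hF0 : ∀ t ≥ t₀, 0 < t * ψ t := fun t ht => mul_pos (htpos t ht) (hpos t ht)
  have hF1 : ∀ t ≥ t₀, t * ψ t < 1 := by
    obtain ⟨T', hT', hT'lt⟩ := hlt
    intro t ht
    have h1 : t * ψ t ≤ (max t T') * ψ (max t T') :=
      hmono (Set.mem_Ici.mpr ht) (Set.mem_Ici.mpr (le_trans ht (le_max_left _ _)))
        (le_max_left _ _)
    exact lt_of_le_of_lt h1 (hT'lt _ (le_max_right _ _))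
  -- S is strictly monotone, bounded below by log, continuous
  have hsmono : ∀ a b, t₀ ≤ a → a < b → S a < S b := by
    intro a c ha hac
    have hca : t₀ ≤ c := le_trans ha hac.le
    have hψa := hpos a ha
    have hψc := hpos c hca
    have h0a : 0 < a := htpos a ha
    have h0c : 0 < c := htpos c hca
    have key : a / ψ a < c / ψ c := by
      have h1 : ψ c ≤ ψ a := hanti (Set.mem_Ici.mpr ha) (Set.mem_Ici.mpr hca) hac.le
      rw [div_lt_div_iff₀ hψa hψc]
      nlinarith
    have hlog := Real.log_lt_log (div_pos h0a hψa) key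
    simp only [hS_def]
    linarith
  have hsle : ∀ a b, t₀ ≤ a → a ≤ b → S a ≤ S b := by
    intro a b ha hab
    rcases eq_or_lt_of_le hab with h | h
    · exact le_of_eq (by rw [h])
    · exact (hsmono a b ha h).le
  have hslog : ∀ t ≥ t₀, Real.log t ≤ S t := by
    intro t ht
    have h0 : 0 < t := htpos t ht
    have hψ := hpos t ht
    have h1 : t * t ≤ t / ψ t := by
      rw [le_div_iff₀ hψ]
      nlinarith [hF1 t ht]
    have h2 : Real.log (t * t) ≤ Real.log (t / ψ t) :=
      Real.log_le_log (by positivity) h1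
    rw [Real.log_mul (ne_of_gt h0) (ne_of_gt h0)] at h2
    simp only [hS_def]
    linarith
  have hscont : ContinuousOn S (Set.Ici t₀) := by
    have h1 : ContinuousOn (fun t => t / ψ t) (Set.Ici t₀) :=
      continuousOn_id.div hcont (fun t ht => (hpos t ht).ne')
    exact continuousOn_const.mul
      (h1.log (fun t ht => ne_of_gt (div_pos (htpos t ht) (hpos t ht))))
  have hsurj : ∀ u ≥ s₀, ∃ t, t₀ ≤ t ∧ S t = u := by
    intro u hu
    set t₁ := max t₀ (Real.exp u) with ht₁
    have h1 : t₀ ≤ t₁ := le_max_left _ _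
    have h2 : u ≤ S t₁ := by
      have h3 : Real.log (Real.exp u) ≤ Real.log t₁ :=
        Real.log_le_log (Real.exp_pos u) (le_max_right _ _)
      rw [Real.log_exp] at h3
      linarith [hslog t₁ h1]
    obtain ⟨t, ht, hst⟩ := intermediate_value_Icc h1 (hscont.mono Set.Icc_subset_Ici_self)
      (Set.mem_Icc.mpr ⟨hu, h2⟩)
    exact ⟨t, ht.1, hst⟩
  have hrval : ∀ t ≥ t₀, r (S t) = Real.sqrt (t * ψ t) := hr
  -- the monotone modification R and the antitone integrand g
  set R : ℝ → ℝ := fun x => r (max x s₀) with hR_def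
  have hRmono : Monotone R := by
    intro x y hxy
    simp only [hR_def]
    obtain ⟨t₁, ht₁, hst₁⟩ := hsurj (max x s₀) (le_max_right _ _)
    obtain ⟨t₂, ht₂, hst₂⟩ := hsurj (max y s₀) (le_max_right _ _)
    have hm : max x s₀ ≤ max y s₀ := max_le_max hxy le_rfl
    have ht12 : t₁ ≤ t₂ := by
      by_contra h
      push_neg at h
      have := hsmono t₂ t₁ ht₂ h
      rw [hst₁, hst₂] at this
      linarith
    rw [← hst₁, ← hst₂, hrval t₁ ht₁, hrval t₂ ht₂]
    exact Real.sqrt_le_sqrt (hmono (Set.mem_Ici.mpr ht₁) (Set.mem_Ici.mpr ht₂) ht12)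
  have hRval : ∀ t ≥ t₀, R (S t) = Real.sqrt (t * ψ t) := by
    intro t ht
    have h1 : s₀ ≤ S t := hsle t₀ t le_rfl ht
    simp only [hR_def, max_eq_left h1]
    exact hrval t ht
  set g : ℝ → ℝ := fun x => 1 - R x with hg_def
  have hganti : Antitone g := fun x y hxy => by
    simp only [hg_def]; linarith [hRmono hxy]
  have hg0 : ∀ x, 0 ≤ g x := by
    intro x
    obtain ⟨t, ht, hst⟩ := hsurj (max x s₀) (le_max_right _ _)
    simp only [hg_def, hR_def, ← hst, hrval t ht]
    linarith [Real.sqrt_le_one.mpr (hF1 t ht).le]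
  have hg1 : ∀ x, g x ≤ 1 := by
    intro x
    obtain ⟨t, ht, hst⟩ := hsurj (max x s₀) (le_max_right _ _)
    simp only [hg_def, hR_def, ← hst, hrval t ht]
    linarith [Real.sqrt_nonneg (t * ψ t)]
  have hgmeas : Measurable g := hganti.measurable
  -- integrability on compact pieces
  have hint : ∀ a b : ℝ, IntegrableOn g (Set.Ioc a b) volume := by
    intro a b
    exact (AntitoneOn.integrableOn_isCompact isCompact_Icc (hganti.antitoneOn _)).mono_set
      Set.Ioc_subset_Icc_self
  -- additivity over adjacent intervals
  have hIoc : ∀ a b c : ℝ, a ≤ b → b ≤ c →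
      ∫ x in Set.Ioc a c, g x = (∫ x in Set.Ioc a b, g x) + ∫ x in Set.Ioc b c, g x := by
    intro a c d hac hcd
    rw [← Set.Ioc_union_Ioc_eq_Ioc hac hcd]
    refine setIntegral_union ?_ measurableSet_Ioc (hint a c) (hint c d)
    exact Set.disjoint_left.mpr (fun x hx hx' => absurd hx.2 (not_le.mpr hx'.1))
  -- bounds for the integral of an antitone function
  have hup : ∀ a b : ℝ, a ≤ b → ∫ x in Set.Ioc a b, g x ≤ (b - a) * g a := by
    intro a c hac
    have h1 : ∫ x in Set.Ioc a c, g x ≤ ∫ _x in Set.Ioc a c, g a :=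
      setIntegral_mono_on (hint a c)
        (integrableOn_const measure_Ioc_lt_top.ne) measurableSet_Ioc
        (fun x hx => hganti hx.1.le)
    rwa [setIntegral_const, Real.volume_real_Ioc_of_le hac,
      smul_eq_mul] at h1
  have hlo : ∀ a b : ℝ, a ≤ b → (b - a) * g b ≤ ∫ x in Set.Ioc a b, g x := by
    intro a c hac
    have h1 : ∫ _x in Set.Ioc a c, g c ≤ ∫ x in Set.Ioc a c, g x :=
      setIntegral_mono_on (integrableOn_const measure_Ioc_lt_top.ne)
        (hint a c) measurableSet_Ioc (fun x hx => hganti hx.2)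
    rwa [setIntegral_const, Real.volume_real_Ioc_of_le hac,
      smul_eq_mul] at h1
  -- the integer grid
  set N : ℕ := ⌈t₀⌉₊ with hN_def
  have hNt₀ : t₀ ≤ (N : ℝ) := Nat.le_ceil t₀
  have hN1 : (1:ℝ) ≤ (N : ℝ) := le_trans ht₀ hNt₀
  set b : ℕ → ℝ := fun n => S ((N : ℝ) + n) with hb_def
  have hbt₀ : ∀ n : ℕ, t₀ ≤ (N : ℝ) + n := fun n => le_trans hNt₀ (le_add_of_nonneg_right n.cast_nonneg)
  have hbmono : ∀ m n : ℕ, m ≤ n → b m ≤ b n := by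
    intro m n hmn
    exact hsle _ _ (hbt₀ m) (by exact_mod_cast Nat.add_le_add_left hmn _)
  have hs₀b : ∀ n : ℕ, s₀ ≤ b n := fun n => hsle t₀ _ le_rfl (hbt₀ n)
  -- bounds on grid increments
  have hdiff_up : ∀ k : ℝ, t₀ ≤ k → S (k+1) - S k ≤ 1 / k := by
    intro k hk
    have hk1 : t₀ ≤ k + 1 := by linarith
    have h0 : 0 < k := htpos k hk
    have hψk := hpos k hk
    have hψk1 := hpos (k+1) hk1
    have hF : k * ψ k ≤ (k+1) * ψ (k+1) :=
      hmono (Set.mem_Ici.mpr hk) (Set.mem_Ici.mpr hk1) (by linarith)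
    have hlog : Real.log (ψ k) - Real.log (ψ (k+1)) ≤ Real.log (k+1) - Real.log k := by
      have h1 : ψ k / ψ (k+1) ≤ (k+1) / k := by
        rw [div_le_div_iff₀ hψk1 h0]
        nlinarith
      have h2 := Real.log_le_log (by positivity) h1
      rw [Real.log_div (ne_of_gt hψk) (ne_of_gt hψk1),
        Real.log_div (by linarith : (k:ℝ)+1 ≠ 0) (ne_of_gt h0)] at h2
      linarith
    have hexpand : S (k+1) - S k =
        1/2 * ((Real.log (k+1) - Real.log (ψ (k+1))) - (Real.log k - Real.log (ψ k))) := by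
      simp only [hS_def]
      rw [Real.log_div (by linarith : (k:ℝ)+1 ≠ 0) (ne_of_gt hψk1),
        Real.log_div (ne_of_gt h0) (ne_of_gt hψk)]
      ring
    have hle := aux_log_le h0
    linarith
  have hdiff_lo : ∀ k : ℝ, t₀ ≤ k → 1 / (2 * (k + 1)) ≤ S (k+1) - S k := by
    intro k hk
    have hk1 : t₀ ≤ k + 1 := by linarith
    have h0 : 0 < k := htpos k hk
    have hψk := hpos k hk
    have hψk1 := hpos (k+1) hk1
    have hlogψ : Real.log (ψ (k+1)) ≤ Real.log (ψ k) :=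
      Real.log_le_log hψk1 (hanti (Set.mem_Ici.mpr hk) (Set.mem_Ici.mpr hk1) (by linarith))
    have hexpand : S (k+1) - S k =
        1/2 * ((Real.log (k+1) - Real.log (ψ (k+1))) - (Real.log k - Real.log (ψ k))) := by
      simp only [hS_def]
      rw [Real.log_div (by linarith : (k:ℝ)+1 ≠ 0) (ne_of_gt hψk1),
        Real.log_div (ne_of_gt h0) (ne_of_gt hψk)]
      ring
    have hle := aux_le_log h0
    have hne : k + 1 ≠ 0 := by positivity
    have heq : 1 / (2 * (k + 1)) = 1/2 * (1 / (k+1)) := by field_simp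
    linarith
  -- bounds on the integral over grid pieces
  have hpiece_up : ∀ k : ℝ, t₀ ≤ k →
      ∫ x in Set.Ioc (S k) (S (k+1)), g x ≤ 1 / k - ψ k := by
    intro k hk
    have h0 : 0 < k := htpos k hk
    have hs1 : S k ≤ S (k+1) := hsle k (k+1) hk (by linarith)
    have hg : g (S k) = 1 - Real.sqrt (k * ψ k) := by
      simp only [hg_def]; rw [hRval k hk]
    have hsq := aux_sqrt_le (hF0 k hk).le (hF1 k hk).le
    calc ∫ x in Set.Ioc (S k) (S (k+1)), g x ≤ (S (k+1) - S k) * g (S k) := hup _ _ hs1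
      _ ≤ (1/k) * g (S k) := mul_le_mul_of_nonneg_right (hdiff_up k hk) (hg0 _)
      _ ≤ (1/k) * (1 - k * ψ k) := by
          rw [hg]
          exact mul_le_mul_of_nonneg_left (by linarith) (by positivity)
      _ = 1 / k - ψ k := by field_simp
  have hpiece_lo : ∀ k : ℝ, t₀ ≤ k →
      (1/4) * (1 / (k+1) - ψ (k+1)) ≤ ∫ x in Set.Ioc (S k) (S (k+1)), g x := by
    intro k hk
    have hk1 : t₀ ≤ k + 1 := by linarith
    have h0 : 0 < k := htpos k hk
    have hs1 : S k ≤ S (k+1) := hsle k (k+1) hk (by linarith)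
    have hg : g (S (k+1)) = 1 - Real.sqrt ((k+1) * ψ (k+1)) := by
      simp only [hg_def]; rw [hRval (k+1) hk1]
    have hsq := aux_half_le (hF0 (k+1) hk1).le (hF1 (k+1) hk1).le
    calc (1/4) * (1 / (k+1) - ψ (k+1))
        = (1 / (2 * (k+1))) * ((1 - (k+1) * ψ (k+1)) / 2) := by
          have hne : k + 1 ≠ 0 := by positivity
          field_simp
          ring_nf
      _ ≤ (1 / (2 * (k+1))) * g (S (k+1)) := by
          refine mul_le_mul_of_nonneg_left ?_ (by positivity)
          rw [hg]; exact hsq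
      _ ≤ (S (k+1) - S k) * g (S (k+1)) :=
          mul_le_mul_of_nonneg_right (hdiff_lo k hk) (hg0 _)
      _ ≤ ∫ x in Set.Ioc (S k) (S (k+1)), g x := hlo _ _ hs1
  -- sum of pieces
  have hsum_int : ∀ n : ℕ, ∫ x in Set.Ioc (b 0) (b n), g x
      = ∑ j ∈ Finset.range n, ∫ x in Set.Ioc (b j) (b (j+1)), g x := by
    intro n
    induction n with
    | zero => simp
    | succ n ih =>
      rw [hIoc (b 0) (b n) (b (n+1)) (hbmono 0 n (Nat.zero_le n)) (hbmono n (n+1) (Nat.le_succ n)),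
        ih, Finset.sum_range_succ]
  -- nonnegativity of terms
  have hTnn : ∀ k : ℕ, 0 ≤ T k := by
    intro k
    simp only [hT_def]
    split_ifs with h
    · have h0 : (0:ℝ) < k := lt_of_lt_of_le (by linarith) h
      have h2 : ψ k ≤ 1 / k := by
        rw [le_div_iff₀ h0]
        nlinarith [hF1 (k:ℝ) h]
      linarith
    · exact le_rfl
  have hTval : ∀ n : ℕ, T (N + n) = 1 / ((N:ℝ) + n) - ψ ((N:ℝ) + n) := by
    intro n
    simp only [hT_def]
    rw [if_pos (by exact_mod_cast hbt₀ n)]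
    push_cast; ring_nf
  -- replace the integrand by g
  have hcongr : IntegrableOn (fun s => 1 - r s) (Set.Ici s₀) volume ↔
      IntegrableOn g (Set.Ici s₀) volume := by
    refine integrableOn_congr_fun (fun x hx => ?_) measurableSet_Ici
    simp only [hg_def, hR_def, max_eq_left (Set.mem_Ici.mp hx)]
  rw [show ((1:ℝ)/2) * Real.log (t₀ / ψ t₀) = s₀ from rfl, hcongr]
  have hbsucc : ∀ j : ℕ, b (j+1) = S ((N:ℝ) + j + 1) := by
    intro j
    simp only [hb_def]
    congr 1
    push_cast
    ring
  have hbtendsto : Filter.Tendsto b Filter.atTop Filter.atTop := by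
    have h1 : Filter.Tendsto (fun n : ℕ => Real.log ((N:ℝ) + n)) Filter.atTop Filter.atTop := by
      apply Real.tendsto_log_atTop.comp
      exact Filter.tendsto_atTop_add_const_left _ _ tendsto_natCast_atTop_atTop
    exact Filter.tendsto_atTop_mono (fun n => hslog _ (hbt₀ n)) h1
  constructor
  · -- integrable → summable
    intro hInt
    rw [← summable_nat_add_iff (N+1)]
    refine summable_of_sum_range_le (c := 4 * ∫ x in Set.Ici s₀, g x) (fun n => hTnn _) ?_
    intro n
    have key : ∀ j : ℕ, T (j + (N+1)) ≤ 4 * ∫ x in Set.Ioc (b j) (b (j+1)), g x := by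
      intro j
      have hTv : T (j + (N+1)) = 1 / ((N:ℝ) + j + 1) - ψ ((N:ℝ) + j + 1) := by
        have hcast : ((j + (N+1) : ℕ) : ℝ) = (N:ℝ) + j + 1 := by push_cast; ring
        simp only [hT_def, hcast]
        rw [if_pos (by linarith [hbt₀ j] : t₀ ≤ (N:ℝ) + j + 1)]
      have h := hpiece_lo ((N:ℝ) + j) (hbt₀ j)
      rw [hTv, hbsucc j]
      linarith
    calc ∑ j ∈ Finset.range n, T (j + (N+1))
        ≤ ∑ j ∈ Finset.range n, 4 * ∫ x in Set.Ioc (b j) (b (j+1)), g x :=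
          Finset.sum_le_sum (fun j _ => key j)
      _ = 4 * ∫ x in Set.Ioc (b 0) (b n), g x := by
          rw [← Finset.mul_sum, ← hsum_int n]
      _ ≤ 4 * ∫ x in Set.Ici s₀, g x := by
          have hsub : Set.Ioc (b 0) (b n) ⊆ Set.Ici s₀ :=
            fun x hx => le_trans (hs₀b 0) hx.1.le
          have h := setIntegral_mono_set hInt (Filter.Eventually.of_forall hg0)
            hsub.eventuallyLE
          linarith
  · -- summable → integrable
    intro hSum
    rw [integrableOn_Ici_iff_integrableOn_Ioi]
    have hshift : Summable (fun j : ℕ => T (j + N)) := (summable_nat_add_iff N).mpr hSum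
    refine integrableOn_Ioi_of_intervalIntegral_norm_bounded
      ((∫ x in Set.Ioc s₀ (b 0), g x) + ∑' j : ℕ, T (j + N)) s₀
      (fun n => hint s₀ (b n)) hbtendsto ?_
    filter_upwards with n
    rw [intervalIntegral.integral_of_le (hs₀b n)]
    have hnorm : ∫ x in Set.Ioc s₀ (b n), ‖g x‖ = ∫ x in Set.Ioc s₀ (b n), g x :=
      setIntegral_congr_fun measurableSet_Ioc (fun x _ => Real.norm_of_nonneg (hg0 x))
    rw [hnorm, hIoc s₀ (b 0) (b n) (hs₀b 0) (hbmono 0 n (Nat.zero_le n)), hsum_int n]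
    have hle : ∀ j : ℕ, ∫ x in Set.Ioc (b j) (b (j+1)), g x ≤ T (j + N) := by
      intro j
      have hTv : T (j + N) = 1 / ((N:ℝ) + j) - ψ ((N:ℝ) + j) := by
        have hcast : ((j + N : ℕ) : ℝ) = (N:ℝ) + j := by push_cast; ring
        simp only [hT_def, hcast]
        rw [if_pos (hbt₀ j)]
      have h := hpiece_up ((N:ℝ) + j) (hbt₀ j)
      rw [hTv, hbsucc j]
      exact h
    have hsum : ∑ j ∈ Finset.range n, ∫ x in Set.Ioc (b j) (b (j+1)), g x
        ≤ ∑' j : ℕ, T (j + N) := by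
      calc ∑ j ∈ Finset.range n, ∫ x in Set.Ioc (b j) (b (j+1)), g x
          ≤ ∑ j ∈ Finset.range n, T (j + N) := Finset.sum_le_sum (fun j _ => hle j)
        _ ≤ ∑' j : ℕ, T (j + N) :=
            hshift.sum_le_tsum (Finset.range n) (fun j _ => hTnn _)
    linarith
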